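/- Let f(x,u) = A_gt z(x,u) for some A_gt ∈ ℝ^{n×ℓ}, with data satisfying the cumulatively bounded noise assumption: x̃_i^+ = A_gt z(x̃_i, ũ_i) + d̃_i with D̃ = [d̃_1 ⋯ d̃_D] satisfying [D̃^T; I_n]^T [[Δ_1, Δ_2],[Δ_2^T, Δ_3]] [D̃^T; I_n] ≺ 0 and Δ_1 ⪰ 0, and assume the matrix [[−Δ̃_1, Δ̃_2],[Δ̃_2^T, −Δ̃_3]] is invertible with inverse [[Δ̄_1, Δ̄_2],[Δ̄_2^T, Δ̄_3]]. Suppose the constraint polynomials have the quadratic form p_j(x,u) = [z(x,u);1]^T P_j [z(x,u);1] with P_j ∈ ℝ^{(ℓ+1)×(ℓ+1)} (j = 1,…,c), and there exist T_x ∈ ℝ^{n×ℓ} and T ∈ ℝ^{(n+m)×ℓ} with x = T_x z(x,u) and [x;u] = T z(x,u) for all (x,u) ∈ ℝ^n × ℝ^m. Let Q ∈ ℝ^{n×n}, S ∈ ℝ^{n×m}, R ∈ ℝ^{m×m} with Q, R symmetric. Suppose there exist a positive semidefinite P ∈ ℝ^{n×n}, a scalar τ ≥ 0, and for each j a row vector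 of monomials z_j ∈ ℝ[x,u]^{1×β} and coefficients τ_j ∈ ℝ^{β} with z_j τ_j an SOS polynomial in (x,u) and a matrix P̃_j(τ_j) ∈ ℝ^{(ℓ+1)×(ℓ+1)} satisfying z_j(x,u)τ_j · [z(x,u);1]^T P_j [z(x,u);1] = [z(x,u);1]^T P̃_j(τ_j) [z(x,u);1] for all (x,u), such that the symmetric matrix Θ ∈ ℝ^{(n+ℓ+1)×(n+ℓ+1)} defined by the quadratic form [v_1; v_2; v_3]^T Θ [v_1; v_2; v_3] = −v_1^T P v_1 + v_2^T T_x^T P T_x v_2 + (T v_2)^T [[Q, S],[S^T, R]] (T v_2) + τ [v_2; v_1]^T [[Δ̄_1, Δ̄_2],[Δ̄_2^T, Δ̄_3]] [v_2; v_1] + [v_2; v_3]^T (Σ_{j=1}^{c} P̃_j(τ_j)) [v_2; v_3] for all v_1 ∈ ℝ^n, v_2 ∈ ℝ^ℓ, v_3 ∈ ℝ, is positive semidefinite. Then for all (x,u) with p_j(x,u) ≤ 0 for j = 1,…,c: f(x,u)^T P f(x,u) − x^T P x ≤ [x;u]^T [[Q, S],[S^T, R]] [x;u]; i.e., the system is (Q,S,R)-dissipative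 on the constraint set with storage function λ(x) = x^T P x. -/

import Mathlib

/-!
Evaluating `Θ ⪰ 0` at `(f(x,u), z(x,u), 1)` gives the dissipation inequality up to two extra
terms: `τ` times the `Δ̄`-form at `(z, A_gt z)`, and the S-procedure term `∑ⱼ σⱼ pⱼ`, which is
`≤ 0` because each `σⱼ = zⱼτⱼ` is SOS and `pⱼ ≤ 0` on the constraint set.

The `Δ̄`-form is `≤ 0` by dualization. The data matrix `N = [[-Δ̃₁, Δ̃₂], [Δ̃₂ᵀ, -Δ̃₃]]` factors as
`-Lᵀ Δ L` with `L = [[Z̃ᵀ, X̃⁺ᵀ], [0, I]]`. Since `X̃⁺ = A_gt Z̃ + D̃`, on the subspace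
`{(-A_gtᵀ η, η)}` the form of `N` is minus the noise form, hence `≥ 0`; on `{(a, 0)}` it is
`-(Z̃ᵀa)ᵀ Δ₁ (Z̃ᵀa) ≤ 0`. For `w = (ζ, A_gt ζ)`, which is orthogonal to the first subspace,
split `N⁻¹ w = u + v` along the two subspaces; then `uᵀ N (u + v) = uᵀ w = 0`, so
`wᵀ N⁻¹ w = (u + v)ᵀ N (u + v) = vᵀ N v - uᵀ N u ≤ 0`.
-/

open Matrix

/-- A polynomial is SOS if it is a finite sum of squares of real polynomials. -/
def IsSOSPoly {σ : Type*} (p : MvPolynomial σ ℝ) : Prop :=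
  ∃ (k : ℕ) (q : Fin k → MvPolynomial σ ℝ), p = ∑ j, (q j) ^ 2

/-- `M ≺ 0`: `M` is (symmetric) negative definite. -/
def IsNegDef {ι : Type*} [Fintype ι] (M : Matrix ι ι ℝ) : Prop :=
  (-M).PosDef

theorem dotProduct_transpose_mul_mul_mulVec {ι κ R : Type*} [Fintype ι] [Fintype κ]
    [CommSemiring R] (C : Matrix κ ι R) (M : Matrix κ κ R) (v : ι → R) :
    v ⬝ᵥ (Cᵀ * M * C) *ᵥ v = (C *ᵥ v) ⬝ᵥ M *ᵥ (C *ᵥ v) := by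
  rw [← mulVec_mulVec, ← mulVec_mulVec, dotProduct_mulVec, vecMul_transpose]

theorem dotProduct_sum_mulVec_nonpos_of_mul_eq {ι κ : Type*} [Fintype ι] {s : Finset κ}
    {M : κ → Matrix ι ι ℝ} {v : ι → ℝ} {σ p : κ → ℝ} (hσ : ∀ j ∈ s, 0 ≤ σ j)
    (hp : ∀ j ∈ s, p j ≤ 0) (h : ∀ j ∈ s, σ j * p j = v ⬝ᵥ M j *ᵥ v) :
    v ⬝ᵥ (∑ j ∈ s, M j) *ᵥ v ≤ 0 := by
  rw [sum_mulVec, dotProduct_sum]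
  exact Finset.sum_nonpos fun j hj => h j hj ▸ mul_nonpos_of_nonneg_of_nonpos (hσ j hj) (hp j hj)

theorem IsSOSPoly.eval_nonneg {σ : Type*} {p : MvPolynomial σ ℝ} (hp : IsSOSPoly p)
    (x : σ → ℝ) : 0 ≤ MvPolynomial.eval x p := by
  obtain ⟨k, q, rfl⟩ := hp
  simp only [map_sum, map_pow]
  exact Finset.sum_nonneg fun j _ => sq_nonneg _

namespace Matrix.IsSymm

variable {ι R : Type*}

theorem transpose_mul_mul {κ : Type*} [Fintype κ] [CommSemiring R] {M : Matrix κ κ R}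
    (hM : M.IsSymm) (C : Matrix κ ι R) : (Cᵀ * M * C).IsSymm := by
  simp only [IsSymm, transpose_mul, transpose_transpose, hM.eq, Matrix.mul_assoc]

variable [Fintype ι]

theorem dotProduct_mulVec_comm [CommSemiring R] {N : Matrix ι ι R} (hN : N.IsSymm)
    (u v : ι → R) : u ⬝ᵥ N *ᵥ v = v ⬝ᵥ N *ᵥ u := by
  rw [dotProduct_mulVec, ← mulVec_transpose, hN, dotProduct_comm]

theorem dotProduct_mulVec_add_nonpos {N : Matrix ι ι ℝ} (hN : N.IsSymm) {u v : ι → ℝ}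
    (horth : u ⬝ᵥ N *ᵥ (u + v) = 0) (hu : 0 ≤ u ⬝ᵥ N *ᵥ u) (hv : v ⬝ᵥ N *ᵥ v ≤ 0) :
    (u + v) ⬝ᵥ N *ᵥ (u + v) ≤ 0 := by
  have hvu := hN.dotProduct_mulVec_comm v u
  simp only [mulVec_add, dotProduct_add, add_dotProduct] at horth ⊢
  linarith

end Matrix.IsSymm

theorem IsNegDef.isSymm {ι : Type*} [Fintype ι] {M : Matrix ι ι ℝ} (hM : IsNegDef M) :
    M.IsSymm :=
  isSymm_neg_iff.mp (isHermitian_iff_isSymm.mp hM.isHermitian)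

theorem IsNegDef.dotProduct_mulVec_nonpos {ι : Type*} [Fintype ι] {M : Matrix ι ι ℝ}
    (hM : IsNegDef M) (v : ι → ℝ) : v ⬝ᵥ M *ᵥ v ≤ 0 := by
  have := hM.posSemidef.dotProduct_mulVec_nonneg v
  simp only [star_trivial, neg_mulVec, dotProduct_neg] at this
  linarith

theorem dotProduct_mulVec_graph_nonpos_of_mul_eq_one {ι κ : Type*} [Fintype ι] [Fintype κ]
    [DecidableEq ι] [DecidableEq κ] {N M : Matrix (ι ⊕ κ) (ι ⊕ κ) ℝ} (hN : N.IsSymm)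
    (hNM : N * M = 1) (A : Matrix κ ι ℝ)
    (hU : ∀ η, 0 ≤ Sum.elim (-(Aᵀ *ᵥ η)) η ⬝ᵥ N *ᵥ Sum.elim (-(Aᵀ *ᵥ η)) η)
    (hV : ∀ a, Sum.elim a 0 ⬝ᵥ N *ᵥ Sum.elim a 0 ≤ 0) (ζ : ι → ℝ) :
    Sum.elim ζ (A *ᵥ ζ) ⬝ᵥ M *ᵥ Sum.elim ζ (A *ᵥ ζ) ≤ 0 := by
  set w := Sum.elim ζ (A *ᵥ ζ)
  set y := M *ᵥ w
  have hNy : N *ᵥ y = w := by rw [mulVec_mulVec, hNM, one_mulVec]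
  set u : ι ⊕ κ → ℝ := Sum.elim (-(Aᵀ *ᵥ (y ∘ Sum.inr))) (y ∘ Sum.inr)
  set v : ι ⊕ κ → ℝ := Sum.elim (y ∘ Sum.inl + Aᵀ *ᵥ (y ∘ Sum.inr)) 0
  have hy : y = u + v := by
    ext (i | k) <;> simp [u, v]
  have horth : u ⬝ᵥ N *ᵥ (u + v) = 0 := by
    rw [← hy, hNy, sumElim_dotProduct_sumElim, neg_dotProduct, mulVec_transpose,
      ← dotProduct_mulVec, dotProduct_comm (y ∘ Sum.inr)]
    ring
  calc w ⬝ᵥ y = (u + v) ⬝ᵥ N *ᵥ (u + v) := by rw [← hy, hNy, dotProduct_comm]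
    _ ≤ 0 := hN.dotProduct_mulVec_add_nonpos horth (hU _) (hV _)

section DataMatrices

variable {ℓ D n R : Type*} [Fintype D] [Fintype n] [DecidableEq n] [CommRing R]

theorem transpose_fromRows_one_mul_fromBlocks_mul_fromRows_one (B : Matrix D n R)
    (Δ1 : Matrix D D R) (Δ2 : Matrix D n R) (Δ3 : Matrix n n R) :
    (fromRows B (1 : Matrix n n R))ᵀ * fromBlocks Δ1 Δ2 Δ2ᵀ Δ3 * fromRows B (1 : Matrix n n R)
      = Bᵀ * Δ1 * B + Bᵀ * Δ2 + Δ2ᵀ * B + Δ3 := by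
  rw [transpose_fromRows, Matrix.mul_assoc, fromBlocks_mul_fromRows, fromCols_mul_fromRows]
  simp only [Matrix.mul_one, Matrix.one_mul, transpose_one, Matrix.mul_add, Matrix.mul_assoc]
  abel

theorem isSymm_of_isSymm_transpose_fromRows_mul_fromBlocks_mul_fromRows {B : Matrix D n R}
    {Δ1 : Matrix D D R} {Δ2 : Matrix D n R} {Δ3 : Matrix n n R} (hΔ1 : Δ1.IsSymm)
    (h : ((fromRows B (1 : Matrix n n R))ᵀ * fromBlocks Δ1 Δ2 Δ2ᵀ Δ3 *
      fromRows B (1 : Matrix n n R)).IsSymm) :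
    Δ3.IsSymm := by
  rw [transpose_fromRows_one_mul_fromBlocks_mul_fromRows_one, IsSymm] at h
  simp only [transpose_add, transpose_mul, transpose_transpose, hΔ1.eq, Matrix.mul_assoc] at h
  have := congrArg (· - (Bᵀ * (Δ1 * B) + Bᵀ * Δ2 + Δ2ᵀ * B)) h
  rw [IsSymm]
  simpa [add_comm, add_left_comm, add_assoc] using this

theorem fromBlocks_neg_data_eq_neg_transpose_mul_mul (Z : Matrix ℓ D R) (X : Matrix n D R)
    {Δ1 : Matrix D D R} (Δ2 : Matrix D n R) (Δ3 : Matrix n n R) (hΔ1 : Δ1.IsSymm) :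
    fromBlocks (-(Z * Δ1 * Zᵀ)) (-(Z * (Δ1 * Xᵀ + Δ2))) (-(Z * (Δ1 * Xᵀ + Δ2)))ᵀ
        (-((fromRows Xᵀ (1 : Matrix n n R))ᵀ * fromBlocks Δ1 Δ2 Δ2ᵀ Δ3 *
          fromRows Xᵀ (1 : Matrix n n R)))
      = -((fromBlocks Zᵀ Xᵀ 0 (1 : Matrix n n R))ᵀ * fromBlocks Δ1 Δ2 Δ2ᵀ Δ3 *
          fromBlocks Zᵀ Xᵀ 0 (1 : Matrix n n R)) := by
  rw [transpose_fromRows_one_mul_fromBlocks_mul_fromRows_one, fromBlocks_transpose,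
    fromBlocks_multiply, fromBlocks_multiply, fromBlocks_neg]
  simp only [transpose_transpose, transpose_neg, transpose_mul, transpose_add, hΔ1.eq,
    transpose_zero, transpose_one, Matrix.mul_zero, Matrix.zero_mul, Matrix.mul_one,
    Matrix.one_mul, add_zero, Matrix.mul_add, Matrix.add_mul, Matrix.mul_assoc]
  congr 1
  abel

variable [Fintype ℓ]

theorem dotProduct_transpose_mul_mul_fromBlocks_sumElim_zero (Z : Matrix ℓ D R)
    (X : Matrix n D R) (Δ1 : Matrix D D R) (Δ2 : Matrix D n R) (Δ3 : Matrix n n R)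
    (a : ℓ → R) :
    Sum.elim a 0 ⬝ᵥ ((fromBlocks Zᵀ Xᵀ 0 (1 : Matrix n n R))ᵀ * fromBlocks Δ1 Δ2 Δ2ᵀ Δ3 *
        fromBlocks Zᵀ Xᵀ 0 (1 : Matrix n n R)) *ᵥ Sum.elim a 0
      = (Zᵀ *ᵥ a) ⬝ᵥ Δ1 *ᵥ (Zᵀ *ᵥ a) := by
  rw [dotProduct_transpose_mul_mul_mulVec]
  simp [fromBlocks_mulVec]

theorem dotProduct_transpose_mul_mul_fromBlocks_sumElim_neg {Z : Matrix ℓ D R}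
    {X E : Matrix n D R} (A : Matrix n ℓ R) (hX : X = A * Z + E) (Δ : Matrix (D ⊕ n) (D ⊕ n) R)
    (η : n → R) :
    Sum.elim (-(Aᵀ *ᵥ η)) η ⬝ᵥ ((fromBlocks Zᵀ Xᵀ 0 (1 : Matrix n n R))ᵀ * Δ *
        fromBlocks Zᵀ Xᵀ 0 (1 : Matrix n n R)) *ᵥ Sum.elim (-(Aᵀ *ᵥ η)) η
      = η ⬝ᵥ ((fromRows Eᵀ (1 : Matrix n n R))ᵀ * Δ * fromRows Eᵀ (1 : Matrix n n R)) *ᵥ η := by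
  have hL : fromBlocks Zᵀ Xᵀ 0 (1 : Matrix n n R) *ᵥ Sum.elim (-(Aᵀ *ᵥ η)) η
      = fromRows Eᵀ (1 : Matrix n n R) *ᵥ η := by
    rw [fromBlocks_mulVec, fromRows_mulVec, hX]
    simp only [Sum.elim_comp_inl, Sum.elim_comp_inr, transpose_add, transpose_mul, add_mulVec,
      ← mulVec_mulVec, mulVec_neg, zero_mulVec, one_mulVec, neg_zero, zero_add,
      neg_add_cancel_left]
  rw [dotProduct_transpose_mul_mul_mulVec, dotProduct_transpose_mul_mul_mulVec, hL]

end DataMatrices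

theorem dotProduct_mulVec_graph_nonpos_of_noise_bound {ℓ D n : Type*} [Fintype ℓ] [Fintype D]
    [Fintype n] [DecidableEq ℓ] [DecidableEq n] {Z : Matrix ℓ D ℝ} {X E : Matrix n D ℝ}
    {A : Matrix n ℓ ℝ} {Δ1 : Matrix D D ℝ} {Δ2 : Matrix D n ℝ} {Δ3 : Matrix n n ℝ}
    (hΔ1 : Δ1.PosSemidef)
    (hnoise : IsNegDef ((fromRows Eᵀ (1 : Matrix n n ℝ))ᵀ * fromBlocks Δ1 Δ2 Δ2ᵀ Δ3 *
      fromRows Eᵀ (1 : Matrix n n ℝ)))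
    (hX : X = A * Z + E) {M : Matrix (ℓ ⊕ n) (ℓ ⊕ n) ℝ}
    (hM : fromBlocks (-(Z * Δ1 * Zᵀ)) (-(Z * (Δ1 * Xᵀ + Δ2))) (-(Z * (Δ1 * Xᵀ + Δ2)))ᵀ
        (-((fromRows Xᵀ (1 : Matrix n n ℝ))ᵀ * fromBlocks Δ1 Δ2 Δ2ᵀ Δ3 *
          fromRows Xᵀ (1 : Matrix n n ℝ))) * M = 1)
    (ζ : ℓ → ℝ) :
    Sum.elim ζ (A *ᵥ ζ) ⬝ᵥ M *ᵥ Sum.elim ζ (A *ᵥ ζ) ≤ 0 := by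
  have hΔ1s : Δ1.IsSymm := isHermitian_iff_isSymm.mp hΔ1.isHermitian
  have hΔ3s : Δ3.IsSymm :=
    isSymm_of_isSymm_transpose_fromRows_mul_fromBlocks_mul_fromRows hΔ1s hnoise.isSymm
  rw [fromBlocks_neg_data_eq_neg_transpose_mul_mul Z X Δ2 Δ3 hΔ1s] at hM
  refine dotProduct_mulVec_graph_nonpos_of_mul_eq_one
    ((IsSymm.fromBlocks hΔ1s rfl hΔ3s).transpose_mul_mul _).neg hM A
    (fun η => ?_) (fun a => ?_) ζ
  · rw [neg_mulVec, dotProduct_neg, dotProduct_transpose_mul_mul_fromBlocks_sumElim_neg A hX]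
    exact neg_nonneg.mpr (hnoise.dotProduct_mulVec_nonpos η)
  · rw [neg_mulVec, dotProduct_neg, dotProduct_transpose_mul_mul_fromBlocks_sumElim_zero,
      neg_nonpos]
    simpa using hΔ1.dotProduct_mulVec_nonneg (Zᵀ *ᵥ a)

theorem stmt7_general {n m ℓ D c β : ℕ}
    (xp xd : Fin D → Fin n → ℝ) (ud : Fin D → Fin m → ℝ)
    (Δ1 : Matrix (Fin D) (Fin D) ℝ) (Δ2 : Matrix (Fin D) (Fin n) ℝ)
    (Δ3 : Matrix (Fin n) (Fin n) ℝ)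
    (hΔ1 : Δ1.PosSemidef)
    -- the evaluated monomial vector `z(x,u)` and the data matrices `X̃⁺`, `Z̃`
    (zval : (Fin n → ℝ) → (Fin m → ℝ) → Fin ℓ → ℝ)
    (Xp : Matrix (Fin n) (Fin D) ℝ) (hXp : ∀ k i, Xp k i = xp i k)
    (Zt : Matrix (Fin ℓ) (Fin D) ℝ) (hZt : ∀ j i, Zt j i = zval (xd i) (ud i) j)
    -- the data-dependent matrices `Δ̃₁`, `Δ̃₂`, `Δ̃₃`
    (Δt1 : Matrix (Fin ℓ) (Fin ℓ) ℝ) (hΔt1 : Δt1 = Zt * Δ1 * Ztᵀ)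
    (Δt2 : Matrix (Fin ℓ) (Fin n) ℝ) (hΔt2 : Δt2 = -(Zt * (Δ1 * Xpᵀ + Δ2)))
    (Δt3 : Matrix (Fin n) (Fin n) ℝ)
    (hΔt3 : Δt3 = (Matrix.fromRows Xpᵀ (1 : Matrix (Fin n) (Fin n) ℝ))ᵀ *
        Matrix.fromBlocks Δ1 Δ2 Δ2ᵀ Δ3 *
        Matrix.fromRows Xpᵀ (1 : Matrix (Fin n) (Fin n) ℝ))
    -- ground-truth system and cumulatively bounded noise
    (Agt : Matrix (Fin n) (Fin ℓ) ℝ) (Dm : Matrix (Fin n) (Fin D) ℝ)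
    (hnoise : IsNegDef ((Matrix.fromRows Dmᵀ (1 : Matrix (Fin n) (Fin n) ℝ))ᵀ *
        Matrix.fromBlocks Δ1 Δ2 Δ2ᵀ Δ3 *
        Matrix.fromRows Dmᵀ (1 : Matrix (Fin n) (Fin n) ℝ)))
    (hdata : ∀ i, xp i = Agt.mulVec (zval (xd i) (ud i)) + fun k => Dm k i)
    (f : (Fin n → ℝ) → (Fin m → ℝ) → (Fin n → ℝ))
    (hf : ∀ x u, f x u = Agt.mulVec (zval x u))
    -- the inverse `[[Δ̄₁, Δ̄₂],[Δ̄₂ᵀ, Δ̄₃]]`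
    (Δb1 : Matrix (Fin ℓ) (Fin ℓ) ℝ) (Δb2 : Matrix (Fin ℓ) (Fin n) ℝ)
    (Δb3 : Matrix (Fin n) (Fin n) ℝ)
    (hinv : Matrix.fromBlocks (-Δt1) Δt2 Δt2ᵀ (-Δt3) *
          Matrix.fromBlocks Δb1 Δb2 Δb2ᵀ Δb3 = 1 ∧
        Matrix.fromBlocks Δb1 Δb2 Δb2ᵀ Δb3 *
          Matrix.fromBlocks (-Δt1) Δt2 Δt2ᵀ (-Δt3) = 1)
    -- quadratic state-input constraints `pⱼ(x,u) = [z(x,u);1]ᵀ Pⱼ [z(x,u);1]`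
    (Pc : Fin c → Matrix (Fin ℓ ⊕ Unit) (Fin ℓ ⊕ Unit) ℝ)
    -- `x = Tₓ z(x,u)` and `[x;u] = T z(x,u)`
    (Tx : Matrix (Fin n) (Fin ℓ) ℝ) (hTx : ∀ x u, x = Tx.mulVec (zval x u))
    (T : Matrix (Fin n ⊕ Fin m) (Fin ℓ) ℝ)
    (hT : ∀ x u, Sum.elim x u = T.mulVec (zval x u))
    -- the supply rate matrices
    (Q : Matrix (Fin n) (Fin n) ℝ) (S : Matrix (Fin n) (Fin m) ℝ)
    (R : Matrix (Fin m) (Fin m) ℝ)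
    -- storage function matrix, multiplier `τ`, and SOS multipliers `zⱼτⱼ`
    (P : Matrix (Fin n) (Fin n) ℝ)
    (τ : ℝ) (hτ : 0 ≤ τ)
    (zrow : Fin c → Fin β → MvPolynomial (Fin (n + m)) ℝ)
    (τc : Fin c → Fin β → ℝ)
    (hsos : ∀ j, IsSOSPoly (∑ b, MvPolynomial.C (τc j b) * zrow j b))
    -- the matrices `P̃ⱼ(τⱼ)` realizing the quadratic decomposition (3)
    (Pt : Fin c → Matrix (Fin ℓ ⊕ Unit) (Fin ℓ ⊕ Unit) ℝ)
    (hPt : ∀ j (x : Fin n → ℝ) (u : Fin m → ℝ),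
      (∑ b, MvPolynomial.eval (Fin.append x u) (zrow j b) * τc j b) *
          (Sum.elim (zval x u) (fun _ => (1 : ℝ)) ⬝ᵥ
            (Pc j).mulVec (Sum.elim (zval x u) fun _ => (1 : ℝ))) =
        Sum.elim (zval x u) (fun _ => (1 : ℝ)) ⬝ᵥ
          (Pt j).mulVec (Sum.elim (zval x u) fun _ => (1 : ℝ)))
    -- the matrix `Θ` of LMI (1), defined through its quadratic form, is PSD
    (Θ : Matrix (Fin n ⊕ (Fin ℓ ⊕ Unit)) (Fin n ⊕ (Fin ℓ ⊕ Unit)) ℝ)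
    (hΘform : ∀ (v1 : Fin n → ℝ) (v2 : Fin ℓ → ℝ) (v3 : ℝ),
      Sum.elim v1 (Sum.elim v2 fun _ => v3) ⬝ᵥ
          Θ.mulVec (Sum.elim v1 (Sum.elim v2 fun _ => v3)) =
        -(v1 ⬝ᵥ P.mulVec v1)
        + Tx.mulVec v2 ⬝ᵥ P.mulVec (Tx.mulVec v2)
        + T.mulVec v2 ⬝ᵥ (Matrix.fromBlocks Q S Sᵀ R).mulVec (T.mulVec v2)
        + τ * (Sum.elim v2 v1 ⬝ᵥ
            (Matrix.fromBlocks Δb1 Δb2 Δb2ᵀ Δb3).mulVec (Sum.elim v2 v1))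
        + Sum.elim v2 (fun _ => v3) ⬝ᵥ
            (∑ j, Pt j).mulVec (Sum.elim v2 fun _ => v3))
    (hΘ : Θ.PosSemidef) :
    -- the system is (Q,S,R)-dissipative on the constraint set with storage `λ(x)=xᵀPx`
    ∀ (x : Fin n → ℝ) (u : Fin m → ℝ),
      (∀ j, Sum.elim (zval x u) (fun _ => (1 : ℝ)) ⬝ᵥ
          (Pc j).mulVec (Sum.elim (zval x u) fun _ => (1 : ℝ)) ≤ 0) →
      f x u ⬝ᵥ P.mulVec (f x u) - x ⬝ᵥ P.mulVec x ≤
        Sum.elim x u ⬝ᵥ (Matrix.fromBlocks Q S Sᵀ R).mulVec (Sum.elim x u) := by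
  intro x u hp
  subst hΔt1 hΔt2 hΔt3
  have hXp_eq : Xp = Agt * Zt + Dm := by
    ext k i
    simp [hXp, hdata, mul_apply, mulVec, dotProduct, hZt]
  have hbar := dotProduct_mulVec_graph_nonpos_of_noise_bound hΔ1 hnoise hXp_eq hinv.1 (zval x u)
  have hmult := dotProduct_sum_mulVec_nonpos_of_mul_eq (s := Finset.univ) (M := Pt)
    (fun j _ => by simpa [mul_comm] using (hsos j).eval_nonneg (Fin.append x u))
    (fun j _ => hp j) (fun j _ => hPt j x u)
  have hΘxu := hΘ.dotProduct_mulVec_nonneg (Sum.elim (f x u) (Sum.elim (zval x u) fun _ => 1))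
  rw [star_trivial, hΘform, ← hTx, ← hT, hf] at hΘxu
  rw [hf]
  linarith [mul_nonpos_of_nonneg_of_nonpos hτ hbar]

/-- Theorem 2: data-driven `(Q,S,R)`-dissipativity verification for cumulatively bounded
noise. Under the cumulative noise assumption, invertibility of
`[[−Δ̃₁, Δ̃₂],[Δ̃₂ᵀ, −Δ̃₃]]` with inverse `[[Δ̄₁, Δ̄₂],[Δ̄₂ᵀ, Δ̄₃]]`, quadratic
constraints `pⱼ(x,u) = [z;1]ᵀ Pⱼ [z;1]`, and `x = Tₓ z`, `[x;u] = T z`, feasibility of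
the LMI (1) (`Θ ⪰ 0`) with a PSD `P`, `τ ≥ 0` and SOS multipliers `zⱼτⱼ` implies that
the system `f(x,u) = A_gt z(x,u)` is `(Q,S,R)`-dissipative on the constraint set with
storage function `λ(x) = xᵀ P x`. -/
theorem stmt7 {n m ℓ D c β : ℕ}
    (z : Fin ℓ → MvPolynomial (Fin (n + m)) ℝ)
    (xp xd : Fin D → Fin n → ℝ) (ud : Fin D → Fin m → ℝ)
    (Δ1 : Matrix (Fin D) (Fin D) ℝ) (Δ2 : Matrix (Fin D) (Fin n) ℝ)
    (Δ3 : Matrix (Fin n) (Fin n) ℝ)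
    (hΔ1 : Δ1.PosSemidef)
    -- the evaluated monomial vector `z(x,u)` and the data matrices `X̃⁺`, `Z̃`
    (zval : (Fin n → ℝ) → (Fin m → ℝ) → Fin ℓ → ℝ)
    (hzval : ∀ x u j, zval x u j = MvPolynomial.eval (Fin.append x u) (z j))
    (Xp : Matrix (Fin n) (Fin D) ℝ) (hXp : ∀ k i, Xp k i = xp i k)
    (Zt : Matrix (Fin ℓ) (Fin D) ℝ) (hZt : ∀ j i, Zt j i = zval (xd i) (ud i) j)
    -- the data-dependent matrices `Δ̃₁`, `Δ̃₂`, `Δ̃₃`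
    (Δt1 : Matrix (Fin ℓ) (Fin ℓ) ℝ) (hΔt1 : Δt1 = Zt * Δ1 * Ztᵀ)
    (Δt2 : Matrix (Fin ℓ) (Fin n) ℝ) (hΔt2 : Δt2 = -(Zt * (Δ1 * Xpᵀ + Δ2)))
    (Δt3 : Matrix (Fin n) (Fin n) ℝ)
    (hΔt3 : Δt3 = (Matrix.fromRows Xpᵀ (1 : Matrix (Fin n) (Fin n) ℝ))ᵀ *
        Matrix.fromBlocks Δ1 Δ2 Δ2ᵀ Δ3 *
        Matrix.fromRows Xpᵀ (1 : Matrix (Fin n) (Fin n) ℝ))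
    -- ground-truth system and cumulatively bounded noise
    (Agt : Matrix (Fin n) (Fin ℓ) ℝ) (Dm : Matrix (Fin n) (Fin D) ℝ)
    (hnoise : IsNegDef ((Matrix.fromRows Dmᵀ (1 : Matrix (Fin n) (Fin n) ℝ))ᵀ *
        Matrix.fromBlocks Δ1 Δ2 Δ2ᵀ Δ3 *
        Matrix.fromRows Dmᵀ (1 : Matrix (Fin n) (Fin n) ℝ)))
    (hdata : ∀ i, xp i = Agt.mulVec (zval (xd i) (ud i)) + fun k => Dm k i)
    (f : (Fin n → ℝ) → (Fin m → ℝ) → (Fin n → ℝ))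
    (hf : ∀ x u, f x u = Agt.mulVec (zval x u))
    -- the inverse `[[Δ̄₁, Δ̄₂],[Δ̄₂ᵀ, Δ̄₃]]`
    (Δb1 : Matrix (Fin ℓ) (Fin ℓ) ℝ) (Δb2 : Matrix (Fin ℓ) (Fin n) ℝ)
    (Δb3 : Matrix (Fin n) (Fin n) ℝ)
    (hinv : Matrix.fromBlocks (-Δt1) Δt2 Δt2ᵀ (-Δt3) *
          Matrix.fromBlocks Δb1 Δb2 Δb2ᵀ Δb3 = 1 ∧
        Matrix.fromBlocks Δb1 Δb2 Δb2ᵀ Δb3 *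
          Matrix.fromBlocks (-Δt1) Δt2 Δt2ᵀ (-Δt3) = 1)
    -- quadratic state-input constraints `pⱼ(x,u) = [z(x,u);1]ᵀ Pⱼ [z(x,u);1]`
    (Pc : Fin c → Matrix (Fin ℓ ⊕ Unit) (Fin ℓ ⊕ Unit) ℝ)
    -- `x = Tₓ z(x,u)` and `[x;u] = T z(x,u)`
    (Tx : Matrix (Fin n) (Fin ℓ) ℝ) (hTx : ∀ x u, x = Tx.mulVec (zval x u))
    (T : Matrix (Fin n ⊕ Fin m) (Fin ℓ) ℝ)
    (hT : ∀ x u, Sum.elim x u = T.mulVec (zval x u))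
    -- the supply rate matrices
    (Q : Matrix (Fin n) (Fin n) ℝ) (S : Matrix (Fin n) (Fin m) ℝ)
    (R : Matrix (Fin m) (Fin m) ℝ) (hQ : Q.IsSymm) (hR : R.IsSymm)
    -- storage function matrix, multiplier `τ`, and SOS multipliers `zⱼτⱼ`
    (P : Matrix (Fin n) (Fin n) ℝ) (hP : P.PosSemidef)
    (τ : ℝ) (hτ : 0 ≤ τ)
    (zrow : Fin c → Fin β → MvPolynomial (Fin (n + m)) ℝ)
    (hmono : ∀ j b, ∃ α : Fin (n + m) →₀ ℕ, zrow j b = MvPolynomial.monomial α 1)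
    (τc : Fin c → Fin β → ℝ)
    (hsos : ∀ j, IsSOSPoly (∑ b, MvPolynomial.C (τc j b) * zrow j b))
    -- the matrices `P̃ⱼ(τⱼ)` realizing the quadratic decomposition (3)
    (Pt : Fin c → Matrix (Fin ℓ ⊕ Unit) (Fin ℓ ⊕ Unit) ℝ)
    (hPt : ∀ j (x : Fin n → ℝ) (u : Fin m → ℝ),
      (∑ b, MvPolynomial.eval (Fin.append x u) (zrow j b) * τc j b) *
          (Sum.elim (zval x u) (fun _ => (1 : ℝ)) ⬝ᵥ
            (Pc j).mulVec (Sum.elim (zval x u) fun _ => (1 : ℝ))) =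
        Sum.elim (zval x u) (fun _ => (1 : ℝ)) ⬝ᵥ
          (Pt j).mulVec (Sum.elim (zval x u) fun _ => (1 : ℝ)))
    -- the matrix `Θ` of LMI (1), defined through its quadratic form, is PSD
    (Θ : Matrix (Fin n ⊕ (Fin ℓ ⊕ Unit)) (Fin n ⊕ (Fin ℓ ⊕ Unit)) ℝ)
    (hΘform : ∀ (v1 : Fin n → ℝ) (v2 : Fin ℓ → ℝ) (v3 : ℝ),
      Sum.elim v1 (Sum.elim v2 fun _ => v3) ⬝ᵥ
          Θ.mulVec (Sum.elim v1 (Sum.elim v2 fun _ => v3)) =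
        -(v1 ⬝ᵥ P.mulVec v1)
        + Tx.mulVec v2 ⬝ᵥ P.mulVec (Tx.mulVec v2)
        + T.mulVec v2 ⬝ᵥ (Matrix.fromBlocks Q S Sᵀ R).mulVec (T.mulVec v2)
        + τ * (Sum.elim v2 v1 ⬝ᵥ
            (Matrix.fromBlocks Δb1 Δb2 Δb2ᵀ Δb3).mulVec (Sum.elim v2 v1))
        + Sum.elim v2 (fun _ => v3) ⬝ᵥ
            (∑ j, Pt j).mulVec (Sum.elim v2 fun _ => v3))
    (hΘ : Θ.PosSemidef) :
    -- the system is (Q,S,R)-dissipative on the constraint set with storage `λ(x)=xᵀPx`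
    ∀ (x : Fin n → ℝ) (u : Fin m → ℝ),
      (∀ j, Sum.elim (zval x u) (fun _ => (1 : ℝ)) ⬝ᵥ
          (Pc j).mulVec (Sum.elim (zval x u) fun _ => (1 : ℝ)) ≤ 0) →
      f x u ⬝ᵥ P.mulVec (f x u) - x ⬝ᵥ P.mulVec x ≤
        Sum.elim x u ⬝ᵥ (Matrix.fromBlocks Q S Sᵀ R).mulVec (Sum.elim x u) :=
  stmt7_general xp xd ud Δ1 Δ2 Δ3 hΔ1 zval Xp hXp Zt hZt Δt1 hΔt1 Δt2 hΔt2 Δt3 hΔt3 Agt Dm hnoise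
    hdata f hf Δb1 Δb2 Δb3 hinv Pc Tx hTx T hT Q S R P τ hτ zrow τc hsos Pt hPt Θ hΘform hΘ
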